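/- arXiv:2201.00215 — 2 statements merged into one kernel-verified Lean document; each statement's English description precedes it below -/
import Mathlib

section
/- For every prime p ≥ 5, every positive integer ℓ, every integer r with 0 < r < p such that 24r+1 is a quadratic nonresidue modulo p, and every n ≥ 0, the generalized Frobenius partition function φ_{pℓ-1} satisfies φ_{pℓ-1}(pn+r) ≡ 0 (mod 2). -/
/-!
Swapping the two rows is an involution on Frobenius arrays whose fixed points `(a; a)`
correspond to partitions of `n` into odd parts `2 a_i + 1`, each used at most `k` times, so
`φ_k(n)` is congruent mod 2 to the number of such partitions. Their generating function is
`∏_{d odd} (1 - q^{d(k+1)}) / (1 - q^d)`, and since `(q;q)_∞ = (q;q²)_∞ (q;q)_∞²` in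
characteristic 2, over `𝔽₂` it equals `A(q) (q;q)_∞` with `A` supported on exponents divisible
by `k + 1 = pℓ`. By Euler's pentagonal number theorem `(q;q)_∞` is supported
on the pentagonal numbers `v`, for which `24 v + 1 = (6 j - 1)²` is a square; hence the
coefficient of `q^(pn+r)` vanishes when `24 r + 1` is not a square mod `p`.
-/

/-- Andrews' generalized Frobenius partition function `φ_k(n)`: the number of
two-rowed arrays `(a_1,…,a_s; b_1,…,b_s)` of nonnegative integers, each row
non-increasing with each entry repeated at most `k` times per row, and
`n = s + Σ a_i + Σ b_i`. -/
noncomputable def genFrobPhi (k n : ℕ) : ℕ :=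
  Set.ncard {x : Σ s : ℕ, (Fin s → ℕ) × (Fin s → ℕ) |
    (∀ i j : Fin x.1, i ≤ j → x.2.1 j ≤ x.2.1 i) ∧
    (∀ i j : Fin x.1, i ≤ j → x.2.2 j ≤ x.2.2 i) ∧
    (∀ v : ℕ, (Finset.univ.filter fun i => x.2.1 i = v).card ≤ k) ∧
    (∀ v : ℕ, (Finset.univ.filter fun i => x.2.2 i = v).card ≤ k) ∧
    n = x.1 + (∑ i, x.2.1 i) + (∑ i, x.2.2 i)}

open Finset PowerSeries PowerSeries.WithPiTopology

theorem Nat.two_mul_add_one_injective : Function.Injective (2 * · + 1 : ℕ → ℕ) :=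
  fun _ _ h ↦ by simpa using h

theorem List.count_ofFn {α : Type*} [DecidableEq α] {s : ℕ} (a : Fin s → α) (v : α) :
    (List.ofFn a).count v = #{i | a i = v} := by
  rw [← Multiset.coe_count, ← Fin.univ_val_map, Multiset.count_map, card_def, filter_val]
  simp_rw [eq_comm]

theorem List.sigma_eq_of_antitone_of_perm_ofFn {α : Type*} [LinearOrder α] {s t : ℕ}
    {a : Fin s → α} {b : Fin t → α} (ha : Antitone a) (hb : Antitone b)
    (h : (List.ofFn a).Perm (List.ofFn b)) : (⟨s, a⟩ : Σ n, Fin n → α) = ⟨t, b⟩ := by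
  refine List.ofFn_inj'.1 (h.eq_of_pairwise' (r := (· ≥ ·)) ?_ ?_)
  · exact List.pairwise_ofFn.2 fun i j hij ↦ ha hij.le
  · exact List.pairwise_ofFn.2 fun i j hij ↦ hb hij.le

theorem Multiset.exists_antitone_coe_ofFn_eq {α : Type*} [LinearOrder α] (m : Multiset α) :
    ∃ (s : ℕ) (a : Fin s → α), Antitone a ∧ (List.ofFn a : Multiset α) = m := by
  refine ⟨_, (m.sort (· ≥ ·)).get, fun i j hij ↦ ?_, by rw [List.ofFn_get, sort_eq]⟩
  exact (m.pairwise_sort (· ≥ ·)).rel_get_of_le hij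

theorem Multiset.sum_map_two_mul_add_one (m : Multiset ℕ) :
    (m.map (2 * · + 1)).sum = 2 * m.sum + card m := by
  induction m using Multiset.induction_on with
  | empty => simp
  | cons a m ih => simp [ih]; ring

theorem Set.ncard_modEq_ncard_inter_fixedPoints {α : Type*} {s : Set α} (hs : s.Finite)
    {g : α → α} (hg : Function.Involutive g) (hmaps : Set.MapsTo g s s) :
    s.ncard ≡ (s ∩ Function.fixedPoints g).ncard [MOD 2] := by
  classical
  have := hs.fintype
  let f : Function.End s := hmaps.restrict
  have hf : f ^ 2 ^ 1 = 1 := funext fun x ↦ Subtype.ext (hg x)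
  have hfix : s ∩ Function.fixedPoints g = Subtype.val '' Function.fixedPoints f := by
    ext x
    simp [f, Function.IsFixedPt, Set.MapsTo.restrict, Subtype.map, and_comm]
  rw [hfix, Set.ncard_image_of_injective _ Subtype.val_injective, ← Nat.card_coe_set_eq,
    ← Nat.card_coe_set_eq, Nat.card_eq_fintype_card, Nat.card_eq_fintype_card]
  exact Equiv.Perm.card_fixedPoints_modEq hf

namespace Nat.Partition

def oddsCountRestricted (n m : ℕ) : Finset n.Partition :=
  odds n ∩ countRestricted n m

def oddPartsPartition {n s : ℕ} (a : Fin s → ℕ) (h : n = s + 2 * ∑ i, a i) : n.Partition where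
  parts := (List.ofFn a : Multiset ℕ).map (2 * · + 1)
  parts_pos := by simp
  parts_sum := by
    rw [Multiset.sum_map_two_mul_add_one, Multiset.sum_coe, Multiset.coe_card, List.sum_ofFn,
      List.length_ofFn, h]
    ring

theorem oddPartsPartition_mem_oddsCountRestricted {n s k : ℕ} {a : Fin s → ℕ}
    (h : n = s + 2 * ∑ i, a i) (ha : ∀ v, (List.ofFn a).count v ≤ k) :
    oddPartsPartition a h ∈ oddsCountRestricted n (k + 1) := by
  simp only [oddsCountRestricted, odds, restricted, countRestricted, mem_inter, mem_filter,
    mem_univ, true_and, oddPartsPartition, Multiset.mem_map]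
  refine ⟨?_, ?_⟩
  · rintro _ ⟨v, -, rfl⟩
    simp [parity_simps]
  · rintro _ ⟨v, -, rfl⟩
    rw [Multiset.count_map_eq_count' _ _ Nat.two_mul_add_one_injective, Multiset.coe_count]
    exact Nat.lt_succ_of_le (ha v)

theorem sigma_eq_of_oddPartsPartition_eq {n s t : ℕ} {a : Fin s → ℕ} {b : Fin t → ℕ}
    {hsa : n = s + 2 * ∑ i, a i} {hsb : n = t + 2 * ∑ i, b i} (ha : Antitone a) (hb : Antitone b)
    (h : oddPartsPartition a hsa = oddPartsPartition b hsb) :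
    (⟨s, a⟩ : Σ s, Fin s → ℕ) = ⟨t, b⟩ := by
  have hmap : (List.ofFn a : Multiset ℕ).map (2 * · + 1) =
      (List.ofFn b : Multiset ℕ).map (2 * · + 1) :=
    congrArg parts h
  exact List.sigma_eq_of_antitone_of_perm_ofFn ha hb
    (Multiset.coe_eq_coe.1 (Multiset.map_injective Nat.two_mul_add_one_injective hmap))

theorem exists_oddPartsPartition_eq {n k : ℕ} {q : n.Partition}
    (hq : q ∈ oddsCountRestricted n (k + 1)) :
    ∃ (s : ℕ) (a : Fin s → ℕ) (h : n = s + 2 * ∑ i, a i),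
      Antitone a ∧ (∀ v, (List.ofFn a).count v ≤ k) ∧ oddPartsPartition a h = q := by
  simp only [oddsCountRestricted, odds, restricted, countRestricted, mem_inter, mem_filter,
    mem_univ, true_and] at hq
  obtain ⟨hodd, hcount⟩ := hq
  obtain ⟨s, a, ha, hM⟩ := (q.parts.map (· / 2)).exists_antitone_coe_ofFn_eq
  have hparts : (List.ofFn a : Multiset ℕ).map (2 * · + 1) = q.parts := by
    rw [hM, Multiset.map_map]
    refine (Multiset.map_congr rfl fun i hi ↦ ?_).trans (Multiset.map_id _)
    exact Nat.two_mul_div_two_add_one_of_odd (Nat.not_even_iff_odd.1 (hodd i hi))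
  have hsum : n = s + 2 * ∑ i, a i := by
    rw [← q.parts_sum, ← hparts, Multiset.sum_map_two_mul_add_one, Multiset.sum_coe,
      Multiset.coe_card, List.sum_ofFn, List.length_ofFn]
    ring
  refine ⟨s, a, hsum, ha, fun v ↦ ?_, Nat.Partition.ext hparts⟩
  rw [← Multiset.coe_count,
    ← Multiset.count_map_eq_count' _ _ Nat.two_mul_add_one_injective, hparts]
  by_cases hv : 2 * v + 1 ∈ q.parts
  · exact Nat.le_of_lt_succ (hcount _ hv)
  · simp [Multiset.count_eq_zero.2 hv]

end Nat.Partition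

open Nat.Partition

def swapRows : (Σ s : ℕ, (Fin s → ℕ) × (Fin s → ℕ)) → Σ s : ℕ, (Fin s → ℕ) × (Fin s → ℕ)
  | ⟨s, a, b⟩ => ⟨s, b, a⟩

theorem swapRows_involutive : Function.Involutive swapRows := fun _ ↦ rfl

theorem isFixedPt_swapRows_iff {s : ℕ} {a b : Fin s → ℕ} :
    Function.IsFixedPt swapRows ⟨s, a, b⟩ ↔ b = a := by
  simp only [Function.IsFixedPt, swapRows, Sigma.mk.injEq, heq_eq_eq, Prod.mk.injEq, true_and]
  exact ⟨And.left, fun h ↦ ⟨h, h.symm⟩⟩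

def IsFrobeniusRow (k : ℕ) {s : ℕ} (a : Fin s → ℕ) : Prop :=
  Antitone a ∧ ∀ v, (List.ofFn a).count v ≤ k

def frobeniusArrays (k n : ℕ) : Set (Σ s : ℕ, (Fin s → ℕ) × (Fin s → ℕ)) :=
  {x | IsFrobeniusRow k x.2.1 ∧ IsFrobeniusRow k x.2.2 ∧ n = x.1 + ∑ i, x.2.1 i + ∑ i, x.2.2 i}

theorem mk_mem_frobeniusArrays {k n s : ℕ} {a b : Fin s → ℕ} :
    ⟨s, a, b⟩ ∈ frobeniusArrays k n ↔
      IsFrobeniusRow k a ∧ IsFrobeniusRow k b ∧ n = s + ∑ i, a i + ∑ i, b i :=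
  Iff.rfl

theorem genFrobPhi_eq_ncard (k n : ℕ) : genFrobPhi k n = (frobeniusArrays k n).ncard := by
  rw [genFrobPhi]
  congr 1
  ext x
  simp only [frobeniusArrays, IsFrobeniusRow, Set.mem_ofPred_eq, List.count_ofFn, Antitone]
  tauto

theorem mapsTo_swapRows_frobeniusArrays (k n : ℕ) :
    Set.MapsTo swapRows (frobeniusArrays k n) (frobeniusArrays k n) := by
  rintro ⟨s, a, b⟩ h
  obtain ⟨ha, hb, hn⟩ := mk_mem_frobeniusArrays.1 h
  exact mk_mem_frobeniusArrays.2 ⟨hb, ha, by omega⟩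

theorem frobeniusArrays_finite (k n : ℕ) : (frobeniusArrays k n).Finite := by
  have hbox (s : ℕ) : (Set.univ.pi fun _ : Fin s ↦ Set.Iic n).Finite :=
    Set.Finite.pi fun _ ↦ Set.finite_Iic n
  refine ((Set.finite_Iic n).biUnion fun s _ ↦
    ((hbox s).prod (hbox s)).image (Sigma.mk s)).subset ?_
  rintro ⟨s, a, b⟩ h
  obtain ⟨-, -, hn⟩ := mk_mem_frobeniusArrays.1 h
  have ha (i : Fin s) : a i ≤ n :=
    (single_le_sum (fun _ _ ↦ Nat.zero_le _) (mem_univ i)).trans (by omega)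
  have hb (i : Fin s) : b i ≤ n :=
    (single_le_sum (fun _ _ ↦ Nat.zero_le _) (mem_univ i)).trans (by omega)
  exact Set.mem_biUnion (by omega : s ≤ n) ⟨(a, b), ⟨fun i _ ↦ ha i, fun i _ ↦ hb i⟩, rfl⟩

theorem mem_frobeniusArrays_inter_fixedPoints {k n : ℕ}
    {x : Σ s : ℕ, (Fin s → ℕ) × (Fin s → ℕ)} :
    x ∈ frobeniusArrays k n ∩ Function.fixedPoints swapRows ↔
      x.2.2 = x.2.1 ∧ IsFrobeniusRow k x.2.1 ∧ n = x.1 + 2 * ∑ i, x.2.1 i := by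
  obtain ⟨s, a, b⟩ := x
  rw [Set.mem_inter_iff, Function.mem_fixedPoints, isFixedPt_swapRows_iff, mk_mem_frobeniusArrays]
  dsimp only
  constructor
  · rintro ⟨⟨ha, -, hn⟩, rfl⟩
    exact ⟨rfl, ha, by rw [hn]; ring⟩
  · rintro ⟨rfl, ha, hn⟩
    exact ⟨⟨ha, ha, by rw [hn]; ring⟩, rfl⟩

theorem ncard_frobeniusArrays_inter_fixedPoints (k n : ℕ) :
    (frobeniusArrays k n ∩ Function.fixedPoints swapRows).ncard =
      #(oddsCountRestricted n (k + 1)) := by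
  rw [← Set.ncard_coe_finset]
  refine Set.ncard_congr
    (fun x hx ↦ oddPartsPartition x.2.1 (mem_frobeniusArrays_inter_fixedPoints.1 hx).2.2)
    (fun x hx ↦ ?_) (fun x y hx hy hxy ↦ ?_) (fun q hq ↦ ?_)
  · exact oddPartsPartition_mem_oddsCountRestricted _
      (mem_frobeniusArrays_inter_fixedPoints.1 hx).2.1.2
  · obtain ⟨s, a, b⟩ := x
    obtain ⟨t, c, d⟩ := y
    simp only [mem_frobeniusArrays_inter_fixedPoints] at hx hy
    obtain ⟨rfl, ⟨ha, -⟩, -⟩ := hx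
    obtain ⟨rfl, ⟨hc, -⟩, -⟩ := hy
    obtain ⟨rfl, h⟩ := Sigma.mk.inj_iff.1 (sigma_eq_of_oddPartsPartition_eq ha hc hxy)
    cases eq_of_heq h
    rfl
  · obtain ⟨s, a, hsum, ha, hcount, rfl⟩ := exists_oddPartsPartition_eq (Finset.mem_coe.1 hq)
    exact ⟨⟨s, a, a⟩, mem_frobeniusArrays_inter_fixedPoints.2 ⟨rfl, ⟨ha, hcount⟩, hsum⟩, rfl⟩

theorem genFrobPhi_modEq_card_oddsCountRestricted (k n : ℕ) :
    genFrobPhi k n ≡ #(oddsCountRestricted n (k + 1)) [MOD 2] := by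
  rw [genFrobPhi_eq_ncard, ← ncard_frobeniusArrays_inter_fixedPoints]
  exact Set.ncard_modEq_ncard_inter_fixedPoints (frobeniusArrays_finite k n) swapRows_involutive
    (mapsTo_swapRows_frobeniusArrays k n)

theorem isSquare_twentyFour_mul_pentagonal_add_one (S : Type*) [CommRing S] (k : ℤ) :
    IsSquare ((24 * pentagonal k + 1 : ℕ) : S) := by
  have h : ((24 * pentagonal k + 1 : ℕ) : ℤ) = (6 * k - 1) * (6 * k - 1) := by
    push_cast
    linear_combination 12 * two_mul_natCast_pentagonal k
  exact ⟨((6 * k - 1 : ℤ) : S), by exact_mod_cast congrArg (Int.cast : ℤ → S) h⟩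

namespace PowerSeries

def supportedOnMultiples (R : Type*) [Semiring R] (d : ℕ) : Submonoid R⟦X⟧ where
  carrier := {f | ∀ j, ¬ d ∣ j → coeff j f = 0}
  one_mem' j hj := by
    rw [coeff_one, if_neg]
    rintro rfl
    exact hj (dvd_zero d)
  mul_mem' {f g} hf hg j hj := by
    rw [coeff_mul]
    refine sum_eq_zero fun ⟨u, v⟩ huv ↦ ?_
    rw [HasAntidiagonal.mem_antidiagonal] at huv
    by_cases hu : d ∣ u
    · rw [hg v fun hv ↦ hj (huv ▸ dvd_add hu hv), mul_zero]
    · rw [hf u hu, zero_mul]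

variable {R : Type*}

theorem mem_supportedOnMultiples [Semiring R] {d : ℕ} {f : R⟦X⟧} :
    f ∈ supportedOnMultiples R d ↔ ∀ j, ¬ d ∣ j → coeff j f = 0 :=
  Iff.rfl

theorem supportedOnMultiples_mono [Semiring R] {d e : ℕ} (hde : d ∣ e) :
    supportedOnMultiples R e ≤ supportedOnMultiples R d :=
  fun _ hf j hj ↦ hf j fun hej ↦ hj (hde.trans hej)

theorem one_sub_X_pow_mem_supportedOnMultiples [Ring R] {d n : ℕ} (hdn : d ∣ n) :
    1 - X ^ n ∈ supportedOnMultiples R d := by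
  intro j hj
  rw [map_sub, coeff_one, coeff_X_pow, if_neg, if_neg, sub_zero]
  · rintro rfl
    exact hj hdn
  · rintro rfl
    exact hj (dvd_zero d)

theorem isClosed_supportedOnMultiples [Semiring R] [TopologicalSpace R] [T1Space R] (d : ℕ) :
    IsClosed (supportedOnMultiples R d : Set R⟦X⟧) := by
  have : (supportedOnMultiples R d : Set R⟦X⟧) = ⋂ j, ⋂ (_ : ¬ d ∣ j), coeff j ⁻¹' {0} := by
    ext f
    simp [mem_supportedOnMultiples]
  rw [this]
  exact isClosed_iInter fun j ↦ isClosed_iInter fun _ ↦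
    isClosed_singleton.preimage (continuous_coeff R j)

variable [CommRing R]

theorem one_sub_sq_of_charTwo [CharP R 2] (f : R⟦X⟧) : (1 - f) ^ 2 = 1 - f ^ 2 := by
  have h2 : (2 : R⟦X⟧) = 0 := by rw [← map_ofNat C 2, CharTwo.two_eq_zero, map_zero]
  linear_combination (f ^ 2 - f) * h2

variable (R) in
theorem isUnit_pentagonalSeries : IsUnit (pentagonalSeries R) := by
  have h := coeff_pentagonalSeries_pentagonal R 0
  rw [show pentagonal 0 = 0 from rfl, coeff_zero_eq_constantCoeff_apply] at h
  rw [isUnit_iff_constantCoeff, h]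
  simp

theorem coeff_mul_pentagonalSeries_eq_zero {p n : ℕ} {A : R⟦X⟧}
    (hA : A ∈ supportedOnMultiples R p) (hn : ¬ IsSquare ((24 * n + 1 : ℕ) : ZMod p)) :
    coeff n (A * pentagonalSeries R) = 0 := by
  rw [coeff_mul]
  refine sum_eq_zero fun ⟨u, v⟩ huv ↦ ?_
  rw [HasAntidiagonal.mem_antidiagonal] at huv
  by_cases hu : p ∣ u
  · refine mul_eq_zero_of_right _ (coeff_pentagonalSeries_eq_zero R ?_)
    rintro ⟨k, rfl⟩
    have hu0 : (u : ZMod p) = 0 := (ZMod.natCast_eq_zero_iff u p).2 hu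
    refine hn ?_
    rw [← huv]
    push_cast
    rw [hu0, zero_add]
    exact_mod_cast isSquare_twentyFour_mul_pentagonal_add_one (ZMod p) k
  · exact mul_eq_zero_of_left (mem_supportedOnMultiples.1 hA u hu) _

theorem hasProd_ite_even_one_sub_X_pow [CharP R 2] [TopologicalSpace R] [IsTopologicalRing R] :
    HasProd (fun i ↦ if Even (i + 1) then 1 - X ^ (i + 1) else (1 : R⟦X⟧))
      (pentagonalSeries R ^ 2) := by
  rw [← Nat.two_mul_add_one_injective.hasProd_iff fun i hi ↦
    if_neg fun ⟨j, hj⟩ ↦ hi ⟨j - 1, by dsimp only; omega⟩, sq]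
  convert (hasProd_one_sub_X_pow R).mul (hasProd_one_sub_X_pow R) using 1
  ext1 j
  rw [Function.comp_apply, if_pos ⟨j + 1, by ring⟩, ← sq, one_sub_sq_of_charTwo, ← pow_mul]
  ring_nf

theorem multipliable_ite_even_one_sub_X_pow_mul [TopologicalSpace R] {m : ℕ} (hm : 0 < m) :
    Multipliable fun i ↦ if Even (i + 1) then 1 else 1 - (X : R⟦X⟧) ^ ((i + 1) * m) := by
  nontriviality R
  have h := multipliable_one_add_of_tendsto_order_atTop_nhds_top R
    (f := fun i ↦ if Even (i + 1) then (0 : R⟦X⟧) else -X ^ ((i + 1) * m)) ?_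
  · exact h.congr fun i ↦ by split_ifs <;> ring
  refine ENat.tendsto_nhds_top_iff_natCast_lt.mpr fun n ↦ Filter.eventually_atTop.mpr ⟨n, ?_⟩
  intro i hi
  split_ifs
  · simp
  · rw [order_neg, order_X_pow]
    norm_cast
    nlinarith

end PowerSeries

namespace Nat.Partition

theorem hasProd_powerSeriesMk_card_oddsCountRestricted (R : Type*) [CommSemiring R]
    [TopologicalSpace R] [T2Space R] {m : ℕ} (hm : 0 < m) :
    HasProd (fun i ↦ if Even (i + 1) then 1 else ∑ j ∈ range m, (X : R⟦X⟧) ^ ((i + 1) * j))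
      (PowerSeries.mk fun n ↦ (#(oddsCountRestricted n m) : R)) := by
  set f : ℕ → ℕ → R := fun i c ↦ if ¬ Even i ∧ c < m then 1 else 0
  have hfactor (i : ℕ) :
      (if Even (i + 1) then 1 else ∑ j ∈ range m, (X : R⟦X⟧) ^ ((i + 1) * j)) =
        1 + ∑' j, f (i + 1) (j + 1) • X ^ ((i + 1) * (j + 1)) := by
    split_ifs with hi
    · simp [f, Nat.not_odd_iff_even.2 hi]
    obtain ⟨m, rfl⟩ := Nat.exists_eq_add_of_lt hm
    rw [zero_add, sum_range_succ', mul_zero, pow_zero, add_comm,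
      tsum_eq_sum (s := range m) fun j hj ↦ by simp_all [f]]
    exact congrArg _ (sum_congr rfl fun j hj ↦ by simp_all [f])
  have hcard : PowerSeries.mk (fun n ↦ (#(oddsCountRestricted n m) : R)) = genFun f := by
    ext n
    rw [coeff_genFun, coeff_mk]
    simp_rw [oddsCountRestricted, odds, restricted, countRestricted]
    rw [← filter_and]
    simp_rw [card_filter, Finsupp.prod, f, prod_boole]
    simp [forall_and]
  rw [funext hfactor, hcard]
  exact hasProd_genFun f

theorem exists_powerSeriesMk_card_oddsCountRestricted_eq_mul_pentagonalSeries
    (R : Type*) [CommRing R] [CharP R 2] {m : ℕ} (hm : 0 < m) :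
    ∃ A ∈ supportedOnMultiples R m,
      PowerSeries.mk (fun n ↦ (#(oddsCountRestricted n m) : R)) = A * pentagonalSeries R := by
  let _ : TopologicalSpace R := ⊥
  have _ : DiscreteTopology R := ⟨rfl⟩
  have hA := multipliable_ite_even_one_sub_X_pow_mul (R := R) hm
  refine ⟨∏' i, if Even (i + 1) then 1 else 1 - X ^ ((i + 1) * m),
    tprod_mem (isClosed_supportedOnMultiples m) fun i ↦ ?_, ?_⟩
  · split_ifs
    · exact one_mem _
    · exact one_sub_X_pow_mem_supportedOnMultiples (dvd_mul_left m _)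
  -- compared factor by factor: `(∑ j ∈ range m, Y ^ j) * (1 - Y) = 1 - Y ^ m`, `Y = X ^ (i + 1)`
  refine (isUnit_pentagonalSeries R).mul_right_cancel ?_
  rw [mul_assoc, ← sq]
  refine ((hasProd_powerSeriesMk_card_oddsCountRestricted R hm).mul
    (hasProd_one_sub_X_pow R)).unique ?_
  refine (hA.hasProd.mul hasProd_ite_even_one_sub_X_pow).congr_fun fun i ↦ ?_
  split_ifs <;> simp [pow_mul, geom_sum_mul_neg]

end Nat.Partition

theorem phi_parity_general (p : ℕ) (hp : p.Prime) (l : ℕ) (hl : 0 < l)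
    (r : ℕ) (hqnr : ¬ IsSquare ((24 * r + 1 : ℕ) : ZMod p)) (n : ℕ) :
    2 ∣ genFrobPhi (p * l - 1) (p * n + r) := by
  have hpl : 0 < p * l := Nat.mul_pos hp.pos hl
  obtain ⟨A, hA, hGF⟩ :=
    exists_powerSeriesMk_card_oddsCountRestricted_eq_mul_pentagonalSeries (ZMod 2) hpl
  have hcard : (#(oddsCountRestricted (p * n + r) (p * l)) : ZMod 2) = 0 := by
    rw [← coeff_mk (p * n + r) fun n ↦ (#(oddsCountRestricted n (p * l)) : ZMod 2), hGF]
    exact coeff_mul_pentagonalSeries_eq_zero (supportedOnMultiples_mono (dvd_mul_right p l) hA)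
      (by simpa using hqnr)
  rw [(genFrobPhi_modEq_card_oddsCountRestricted _ _).dvd_iff dvd_rfl, Nat.sub_add_cancel hpl]
  exact (ZMod.natCast_eq_zero_iff _ 2).1 hcard

theorem phi_parity (p : ℕ) (hp : p.Prime) (hp5 : 5 ≤ p) (l : ℕ) (hl : 0 < l)
    (r : ℕ) (hr0 : 0 < r) (hrp : r < p)
    (hqnr : ¬ IsSquare ((24 * r + 1 : ℕ) : ZMod p)) (n : ℕ) :
    2 ∣ genFrobPhi (p * l - 1) (p * n + r) :=
  phi_parity_general p hp l hl r hqnr n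
end

section
/- For all positive integers k and all n ≥ 0, the generalized Frobenius partition function with 2k colors satisfies cφ_{2k}(2n+1) ≡ 0 (mod 2). -/
/-- Andrews' `m`-colored generalized Frobenius partition function `cφ_m(n)`:
the constant term (coefficient of `z⁰ qⁿ`) in
`Π_{v ≥ 0} (1 + z q^{v+1})^m (1 + z⁻¹ q^v)^m`.  Expanding the product, this
constant term counts pairs of finite sets `S, T ⊆ ℕ × Fin m` (the top and
bottom rows of colored entries) with `|S| = |T|` and
`n = Σ_{(v,c) ∈ S} (v+1) + Σ_{(v,c) ∈ T} v = |S| + Σ_S v + Σ_T v`. -/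
noncomputable def genFrobCPhi (m n : ℕ) : ℕ :=
  Set.ncard {ST : Finset (ℕ × Fin m) × Finset (ℕ × Fin m) |
    ST.1.card = ST.2.card ∧
    n = ST.1.card + (∑ x ∈ ST.1, x.1) + (∑ x ∈ ST.2, x.1)}

/-!
Reversing the colours, `c ↦ 2k - 1 - c`, is a fixed-point-free involution of `Fin (2k)`. Applied
to both rows it permutes the pairs `(S, T)` counted by `cφ_{2k}(n)`, preserving `|S|` and the
entries. A pair fixed by it has rows made of two-element orbits `{(v, c), (v, c')}`, so `|S|`,
`Σ_S v` and `Σ_T v` are all even, and so is the weight `n`. For odd `n` the pairs therefore fall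
into orbits of size two.
-/

open Finset Function

theorem Finset.sum_eq_zero_of_involution_of_charTwo {α R : Type*} [Ring R] [CharP R 2]
    {s : Finset α} (σ : α → α) (hσ : Involutive σ) (hs : ∀ a ∈ s, σ a ∈ s)
    (hfix : ∀ a ∈ s, σ a ≠ a) {f : α → R} (hf : ∀ a, f (σ a) = f a) :
    ∑ a ∈ s, f a = 0 :=
  sum_involution (fun a _ => σ a) (fun a _ => by rw [hf, CharTwo.add_self_eq_zero])
    (fun a ha _ => hfix a ha) hs (fun a _ => hσ a)

theorem Set.two_dvd_ncard_of_involution {α : Type*} {s : Set α} (σ : α → α)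
    (hσ : Involutive σ) (hs : ∀ a ∈ s, σ a ∈ s) (hfix : ∀ a ∈ s, σ a ≠ a) :
    2 ∣ s.ncard := by
  obtain hfin | hinf := s.finite_or_infinite
  · rw [Set.ncard_eq_toFinset_card s hfin, ← ZMod.natCast_eq_zero_iff, card_eq_sum_ones,
      Nat.cast_sum]
    exact sum_eq_zero_of_involution_of_charTwo σ hσ (by simpa using hs) (by simpa using hfix)
      fun _ => rfl
  · rw [hinf.ncard]
    exact dvd_zero 2

def frobeniusPairs (C : Type*) (n : ℕ) : Set (Finset (ℕ × C) × Finset (ℕ × C)) :=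
  {ST | ST.1.card = ST.2.card ∧
    n = ST.1.card + (∑ x ∈ ST.1, x.1) + (∑ x ∈ ST.2, x.1)}

theorem genFrobCPhi_eq_ncard_frobeniusPairs (m n : ℕ) :
    genFrobCPhi m n = (frobeniusPairs (Fin m) n).ncard :=
  rfl

section Recolor

variable {C : Type*} (τ : Equiv.Perm C)

def recolor (S : Finset (ℕ × C)) : Finset (ℕ × C) :=
  S.map ((Equiv.refl ℕ).prodCongr τ).toEmbedding

variable {τ}

theorem recolor_involutive (hτ : Involutive τ) : Involutive (recolor τ) := by
  intro S
  rw [recolor, recolor, map_map]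
  convert map_refl
  ext x <;> simp [hτ _]

theorem card_recolor (S : Finset (ℕ × C)) : (recolor τ S).card = S.card :=
  card_map _

theorem sum_fst_recolor (S : Finset (ℕ × C)) :
    ∑ x ∈ recolor τ S, x.1 = ∑ x ∈ S, x.1 :=
  sum_map _ _ _

theorem sum_fst_eq_zero_of_recolor_eq_self {R : Type*} [Ring R] [CharP R 2]
    (hτ : Involutive τ) (hfix : ∀ c, τ c ≠ c) {S : Finset (ℕ × C)} (hS : recolor τ S = S)
    (g : ℕ → R) : ∑ x ∈ S, g x.1 = 0 := by
  refine sum_eq_zero_of_involution_of_charTwo (Prod.map id τ)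
    (Involutive.prodMap (fun _ => rfl) hτ) (fun a ha => ?_)
    (fun a _ h => hfix a.2 (congrArg Prod.snd h)) fun _ => rfl
  rw [← hS]
  exact mem_map_of_mem _ ha

theorem prodMap_recolor_mem_frobeniusPairs {n : ℕ} {ST : Finset (ℕ × C) × Finset (ℕ × C)}
    (h : ST ∈ frobeniusPairs C n) :
    Prod.map (recolor τ) (recolor τ) ST ∈ frobeniusPairs C n := by
  simpa only [frobeniusPairs, Set.mem_ofPred_eq, Prod.map, card_recolor, sum_fst_recolor] using h

theorem even_of_mem_frobeniusPairs_of_recolor_eq_self (hτ : Involutive τ)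
    (hfix : ∀ c, τ c ≠ c) {n : ℕ} {ST : Finset (ℕ × C) × Finset (ℕ × C)}
    (h : ST ∈ frobeniusPairs C n)
    (hST : Prod.map (recolor τ) (recolor τ) ST = ST) : Even n := by
  have h₁ : ∀ g : ℕ → ZMod 2, ∑ x ∈ ST.1, g x.1 = 0 :=
    sum_fst_eq_zero_of_recolor_eq_self hτ hfix (congrArg Prod.fst hST)
  have h₂ : ∀ g : ℕ → ZMod 2, ∑ x ∈ ST.2, g x.1 = 0 :=
    sum_fst_eq_zero_of_recolor_eq_self hτ hfix (congrArg Prod.snd hST)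
  rw [← ZMod.natCast_eq_zero_iff_even, h.2, card_eq_sum_ones]
  push_cast
  rw [h₁ fun _ => 1, h₁ Nat.cast, h₂ Nat.cast, add_zero, add_zero]

theorem two_dvd_ncard_frobeniusPairs (hτ : Involutive τ) (hfix : ∀ c, τ c ≠ c) {n : ℕ}
    (hn : Odd n) : 2 ∣ (frobeniusPairs C n).ncard :=
  Set.two_dvd_ncard_of_involution _ ((recolor_involutive hτ).prodMap (recolor_involutive hτ))
    (fun _ => prodMap_recolor_mem_frobeniusPairs)
    fun _ h hST => Nat.not_even_iff_odd.mpr hn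
      (even_of_mem_frobeniusPairs_of_recolor_eq_self hτ hfix h hST)

end Recolor

theorem Fin.rev_ne_self_of_even {m : ℕ} (hm : Even m) (i : Fin m) : i.rev ≠ i := by
  obtain ⟨j, rfl⟩ := hm
  have := Fin.val_rev i
  exact fun h => by omega

theorem cphi_even_odd_general (k : ℕ) (n : ℕ) :
    2 ∣ genFrobCPhi (2 * k) (2 * n + 1) := by
  rw [genFrobCPhi_eq_ncard_frobeniusPairs]
  exact two_dvd_ncard_frobeniusPairs (τ := Fin.revPerm) Fin.rev_involutive
    (Fin.rev_ne_self_of_even (even_two_mul k)) (odd_two_mul_add_one n)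

theorem cphi_even_odd (k : ℕ) (hk : 0 < k) (n : ℕ) :
    2 ∣ genFrobCPhi (2 * k) (2 * n + 1) :=
  cphi_even_odd_general k n
end
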